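/- Let α, ε > 0 and set ε* = (α/8)·(ε²/9). For every (ε/3, ε/3)-good edge (A,B) ∈ I: if Pr_{B''∼W_I(A)}[B'' is A-heavy] > α/2, then Pr_{B'∼uniform on N_I(A)}[B' is A-heavy and p_cons(B') ≥ ε*] > (α/108)·ε³. -/

import Mathlib

open Finset
open scoped Classical
namespace IJKW
noncomputable def prEvent {n : ℕ} (D : ((Fin n → Bool) → Bool) → ℝ)
    (E : ((Fin n → Bool) → Bool) → Prop) : ℝ :=
  ∑ v : (Fin n → Bool) → Bool, if E v then D v else 0
def Sk (n k : ℕ) : Finset (Finset (Fin n → Bool)) :=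
  Finset.univ.filter fun B => B.card = k
noncomputable def Corr {n : ℕ} (g : (Fin n → Bool) → Bool)
    (G : Finset (Fin n → Bool) → ((Fin n → Bool) → Bool) → ℝ)
    (B : Finset (Fin n → Bool)) : ℝ :=
  prEvent (G B) fun v => ∀ x ∈ B, v x = g x
def NI (n k : ℕ) (A : Finset (Fin n → Bool)) : Finset (Finset (Fin n → Bool)) :=
  (Sk n k).filter fun B => A ⊆ B
def NIx (n k : ℕ) (A : Finset (Fin n → Bool)) (x : Fin n → Bool) :
    Finset (Finset (Fin n → Bool)) :=
  (Sk n k).filter fun B => A ⊆ B ∧ x ∈ B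
def Edges (n k : ℕ) : Finset (Finset (Fin n → Bool) × Finset (Fin n → Bool)) :=
  Finset.univ.filter fun p => p.1.card = k / 2 ∧ p.2.card = k ∧ p.1 ⊆ p.2
noncomputable def pcons {n : ℕ} (g : (Fin n → Bool) → Bool)
    (G : Finset (Fin n → Bool) → ((Fin n → Bool) → Bool) → ℝ)
    (A B : Finset (Fin n → Bool)) : ℝ :=
  prEvent (G B) fun v => ∀ a ∈ A, v a = g a
def IsGood {n : ℕ} (g : (Fin n → Bool) → Bool)
    (G : Finset (Fin n → Bool) → ((Fin n → Bool) → Bool) → ℝ)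
    (k : ℕ) (γ η : ℝ) (A B : Finset (Fin n → Bool)) : Prop :=
  η ≤ Corr g G B ∧
    γ ≤ (((NI n k A).filter fun B' => η ≤ Corr g G B').card : ℝ) / ((NI n k A).card : ℝ)

-- extra definitions
/-- `p_tot(A) = ∑_{B' ∈ N_I(A)} p_cons(B')`. -/
noncomputable def ptot {n : ℕ} (g : (Fin n → Bool) → Bool)
    (G : Finset (Fin n → Bool) → ((Fin n → Bool) → Bool) → ℝ)
    (k : ℕ) (A : Finset (Fin n → Bool)) : ℝ :=
  ∑ B ∈ NI n k A, pcons g G A B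

/-- Expectation of `F` under the distribution `W_I(A)`, which assigns `B' ∈ N_I(A)` the
probability `p_cons(B') / p_tot(A)`. -/
noncomputable def Wexp {n : ℕ} (g : (Fin n → Bool) → Bool)
    (G : Finset (Fin n → Bool) → ((Fin n → Bool) → Bool) → ℝ)
    (k : ℕ) (A : Finset (Fin n → Bool)) (F : Finset (Fin n → Bool) → ℝ) : ℝ :=
  (∑ B ∈ NI n k A, pcons g G A B * F B) / ptot g G k A

/-- `p_err(x, B') = Pr_{v ∼ 𝒢(B')}[v|_x ≠ g(x) ∣ v|_A = g^{k/2}(A)]`. -/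
noncomputable def perr {n : ℕ} (g : (Fin n → Bool) → Bool)
    (G : Finset (Fin n → Bool) → ((Fin n → Bool) → Bool) → ℝ)
    (A : Finset (Fin n → Bool)) (x : Fin n → Bool) (B : Finset (Fin n → Bool)) : ℝ :=
  prEvent (G B) (fun v => v x ≠ g x ∧ ∀ a ∈ A, v a = g a) / pcons g G A B

/-- `ErrCons(A, B') = E_{x ∼ uniform on B'∖A}[p_err(x, B')]`. -/
noncomputable def ErrCons {n : ℕ} (g : (Fin n → Bool) → Bool)
    (G : Finset (Fin n → Bool) → ((Fin n → Bool) → Bool) → ℝ)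
    (A B : Finset (Fin n → Bool)) : ℝ :=
  (∑ x ∈ B \ A, perr g G A x B) / ((B \ A).card : ℝ)

/-- An edge `(A,B)` is `(γ,η,α)`-excellent if it is `(γ,η)`-good and
`E_{B' ∼ W_I(A)}[ErrCons(A,B')] ≤ α`. -/
def IsExcellent {n : ℕ} (g : (Fin n → Bool) → Bool)
    (G : Finset (Fin n → Bool) → ((Fin n → Bool) → Bool) → ℝ)
    (k : ℕ) (γ η α : ℝ) (A B : Finset (Fin n → Bool)) : Prop :=
  IsGood g G k γ η A B ∧ Wexp g G k A (fun B' => ErrCons g G A B') ≤ α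

/-- `p_tot(x) = ∑_{B ∈ N_I(A,x)} p_cons(B)`. -/
noncomputable def ptotx {n : ℕ} (g : (Fin n → Bool) → Bool)
    (G : Finset (Fin n → Bool) → ((Fin n → Bool) → Bool) → ℝ)
    (k : ℕ) (A : Finset (Fin n → Bool)) (x : Fin n → Bool) : ℝ :=
  ∑ B ∈ NIx n k A x, pcons g G A B

/-- `h(x) = ∑_{B ∈ N_I(A,x)} p_err(x,B) · p_used(x,B)` with `p_used(x,B) = p_cons(B)/p_tot(x)`. -/
noncomputable def hFn {n : ℕ} (g : (Fin n → Bool) → Bool)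
    (G : Finset (Fin n → Bool) → ((Fin n → Bool) → Bool) → ℝ)
    (k : ℕ) (A : Finset (Fin n → Bool)) (x : Fin n → Bool) : ℝ :=
  ∑ B ∈ NIx n k A x, perr g G A x B * (pcons g G A B / ptotx g G k A x)

/-- `μ(B') = E_{x ∼ uniform on B'∖A}[h(x)]`. -/
noncomputable def muFn {n : ℕ} (g : (Fin n → Bool) → Bool)
    (G : Finset (Fin n → Bool) → ((Fin n → Bool) → Bool) → ℝ)
    (k : ℕ) (A B' : Finset (Fin n → Bool)) : ℝ :=
  (∑ x ∈ B' \ A, hFn g G k A x) / ((B' \ A).card : ℝ)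

/-- The bucket `Γ_i = {B' ∈ N_I(A) : 2^{-i-1} < p_cons(B') ≤ 2^{-i}}`. -/
noncomputable def Gam {n : ℕ} (g : (Fin n → Bool) → Bool)
    (G : Finset (Fin n → Bool) → ((Fin n → Bool) → Bool) → ℝ)
    (k : ℕ) (A : Finset (Fin n → Bool)) (i : ℕ) : Finset (Finset (Fin n → Bool)) :=
  (NI n k A).filter fun B' =>
    ((2 : ℝ) ^ (i + 1))⁻¹ < pcons g G A B' ∧ pcons g G A B' ≤ ((2 : ℝ) ^ i)⁻¹

/-- The exceptional bucket `Γ_{ℓ+1} = {B' ∈ N_I(A) : p_cons(B') ≤ 2^{-ℓ-1}}`, where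
`ℓ = ⌈5·log₂(1/(γη))⌉`. -/
noncomputable def GamTop {n : ℕ} (g : (Fin n → Bool) → Bool)
    (G : Finset (Fin n → Bool) → ((Fin n → Bool) → Bool) → ℝ)
    (k : ℕ) (A : Finset (Fin n → Bool)) (γ η : ℝ) : Finset (Finset (Fin n → Bool)) :=
  (NI n k A).filter fun B' =>
    pcons g G A B' ≤ ((2 : ℝ) ^ (⌈5 * Real.logb 2 (1 / (γ * η))⌉₊ + 1))⁻¹

/-- The probability that one iteration of the decoder `C_{A,w}` on input `x ∉ A` halts,
i.e. that for `B'` uniform on `N_I(A,x)` and `v ∼ 𝒢(B')` we have `v|_A = w`. -/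
noncomputable def phalt {n : ℕ}
    (G : Finset (Fin n → Bool) → ((Fin n → Bool) → Bool) → ℝ)
    (k : ℕ) (A : Finset (Fin n → Bool)) (w : (Fin n → Bool) → Bool) (x : Fin n → Bool) : ℝ :=
  (∑ B ∈ NIx n k A x, prEvent (G B) fun v => ∀ a ∈ A, v a = w a) / ((NIx n k A x).card : ℝ)

/-- The probability that one iteration of the decoder `C_{A,w}` on input `x ∉ A` halts with
output bit `b`. -/
noncomputable def phaltBit {n : ℕ}
    (G : Finset (Fin n → Bool) → ((Fin n → Bool) → Bool) → ℝ)
    (k : ℕ) (A : Finset (Fin n → Bool)) (w : (Fin n → Bool) → Bool) (x : Fin n → Bool)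
    (b : Bool) : ℝ :=
  (∑ B ∈ NIx n k A x, prEvent (G B) fun v => (∀ a ∈ A, v a = w a) ∧ v x = b) /
    ((NIx n k A x).card : ℝ)

/-- The probability that the randomized decoder `C_{A,w}` with `T` iterations outputs the
bit `b` on input `x`.  For `x ∈ A` it deterministically outputs `w|_x`; otherwise, the `i`-th
iteration is reached with probability `(1 - phalt)^{i-1}` and halts with output `b` with
probability `phaltBit b`. -/
noncomputable def probOutEq {n : ℕ}
    (G : Finset (Fin n → Bool) → ((Fin n → Bool) → Bool) → ℝ)
    (k : ℕ) (A : Finset (Fin n → Bool)) (T : ℕ) (w : (Fin n → Bool) → Bool)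
    (x : Fin n → Bool) (b : Bool) : ℝ :=
  if x ∈ A then (if w x = b then 1 else 0)
  else phaltBit G k A w x b * ∑ i ∈ Finset.range T, (1 - phalt G k A w x) ^ i

/-- The probability that the randomized decoder `C_{A,w}` with `T` iterations outputs `⊥`
on input `x`. -/
noncomputable def probOutBot {n : ℕ}
    (G : Finset (Fin n → Bool) → ((Fin n → Bool) → Bool) → ℝ)
    (k : ℕ) (A : Finset (Fin n → Bool)) (T : ℕ) (w : (Fin n → Bool) → Bool)
    (x : Fin n → Bool) : ℝ :=
  if x ∈ A then 0 else (1 - phalt G k A w x) ^ T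

/-- `B''` is `A`-heavy: `Pr_{v ∼ 𝒢(B''), x ∼ uniform on B''∖A}[v|_x ≠ g(x) ∣ v|_A = g^{k/2}(A)]
  > α/2`. -/
noncomputable def IsHeavy {n : ℕ} (g : (Fin n → Bool) → Bool)
    (G : Finset (Fin n → Bool) → ((Fin n → Bool) → Bool) → ℝ)
    (A : Finset (Fin n → Bool)) (α : ℝ) (B'' : Finset (Fin n → Bool)) : Prop :=
  α / 2 <
    ((∑ x ∈ B'' \ A, prEvent (G B'') fun v => v x ≠ g x ∧ ∀ a ∈ A, v a = g a) /
        ((B'' \ A).card : ℝ)) / pcons g G A B''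

end IJKW

/-! At least an `ε/3` fraction of `N_I(A)` has `Corr ≥ ε/3`, and `Corr ≤ p_cons`, so
`p_tot(A) ≥ (ε²/9)·|N_I(A)|`. The heavy sets carry more than `(α/2)·p_tot(A)` of this mass.
Those with `p_cons < ε*` carry at most `ε*·|N_I(A)| = (αε²/72)·|N_I(A)|` and the others at
most `1` each, so more than `(αε²/24)·|N_I(A)|` heavy sets have `p_cons ≥ ε*`; this exceeds
`(αε³/108)·|N_I(A)|` since `ε ≤ 3`. -/

namespace Finset

variable {ι R : Type*} [Semiring R] [LinearOrder R] [IsOrderedRing R] {s : Finset ι} {f : ι → R}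

lemma mul_card_filter_le_sum (hf : ∀ i ∈ s, 0 ≤ f i) (t : R) :
    t * #(s.filter (t ≤ f ·)) ≤ ∑ i ∈ s, f i :=
  calc t * #(s.filter (t ≤ f ·))
      = #(s.filter (t ≤ f ·)) • t := by rw [nsmul_eq_mul, Nat.cast_comm]
    _ ≤ ∑ i ∈ s.filter (t ≤ f ·), f i := card_nsmul_le_sum _ _ _ fun i hi => (mem_filter.1 hi).2
    _ ≤ ∑ i ∈ s, f i := sum_le_sum_of_subset_of_nonneg (filter_subset _ _) fun i hi _ => hf i hi

lemma sum_le_card_filter_add_mul_card {t : R} (ht : 0 ≤ t) (hf : ∀ i ∈ s, f i ≤ 1) :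
    ∑ i ∈ s, f i ≤ #(s.filter (t ≤ f ·)) + t * #s := by
  rw [← sum_filter_add_sum_filter_not s (t ≤ f ·)]
  gcongr
  · calc ∑ i ∈ s.filter (t ≤ f ·), f i ≤ #(s.filter (t ≤ f ·)) • (1 : R) :=
          sum_le_card_nsmul _ _ _ fun i hi => hf i (mem_filter.1 hi).1
      _ = #(s.filter (t ≤ f ·)) := nsmul_one _
  · calc ∑ i ∈ s.filter (¬t ≤ f ·), f i ≤ #(s.filter (¬t ≤ f ·)) • t :=
          sum_le_card_nsmul _ _ _ fun i hi => (not_le.1 (mem_filter.1 hi).2).le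
      _ ≤ t * #s := by
          rw [nsmul_eq_mul, Nat.cast_comm]
          gcongr
          exact filter_subset _ _

end Finset

namespace IJKW

section Distribution

variable {n : ℕ} {D : ((Fin n → Bool) → Bool) → ℝ}

lemma prEvent_nonneg (hD : ∀ v, 0 ≤ D v) (E : ((Fin n → Bool) → Bool) → Prop) :
    0 ≤ prEvent D E :=
  sum_nonneg fun v _ => ite_nonneg (hD v) le_rfl

lemma prEvent_mono (hD : ∀ v, 0 ≤ D v) {E E' : ((Fin n → Bool) → Bool) → Prop}
    (h : ∀ v, E v → E' v) : prEvent D E ≤ prEvent D E' :=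
  sum_le_sum fun v _ => by
    by_cases hE : E v
    · simp [hE, h v hE]
    · simp only [hE, if_false]
      split_ifs <;> simp [hD v]

lemma prEvent_le_one (hD : ∀ v, 0 ≤ D v) (hD1 : ∑ v, D v = 1)
    (E : ((Fin n → Bool) → Bool) → Prop) : prEvent D E ≤ 1 :=
  calc prEvent D E ≤ prEvent D fun _ => True := prEvent_mono hD fun _ _ => trivial
    _ = 1 := by simp [prEvent, hD1]

end Distribution

section Edge

variable {n k : ℕ} {g : (Fin n → Bool) → Bool}
  {G : Finset (Fin n → Bool) → ((Fin n → Bool) → Bool) → ℝ} {A B : Finset (Fin n → Bool)}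

lemma mem_Sk_of_mem_NI (hB : B ∈ NI n k A) : B ∈ Sk n k := (mem_filter.1 hB).1

lemma Corr_le_pcons (hG : ∀ v, 0 ≤ G B v) (hAB : A ⊆ B) : Corr g G B ≤ pcons g G A B :=
  prEvent_mono hG fun _ hv a ha => hv a (hAB ha)

lemma pcons_le_one (hG : ∀ v, 0 ≤ G B v) (hG1 : ∑ v, G B v = 1) : pcons g G A B ≤ 1 :=
  prEvent_le_one hG hG1 _

variable {γ η : ℝ}

lemma IsGood.card_NI_pos (h : IsGood g G k γ η A B) (hγ : 0 < γ) :
    (0 : ℝ) < #(NI n k A) := by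
  by_contra! hN
  have hfrac := h.2
  rw [le_antisymm hN (Nat.cast_nonneg _), div_zero] at hfrac
  linarith

lemma IsGood.le_one (h : IsGood g G k γ η A B) : γ ≤ 1 :=
  h.2.trans (div_le_one_of_le₀ (Nat.cast_le.2 (card_filter_le _ _)) (Nat.cast_nonneg _))

lemma IsGood.mul_mul_card_le_ptot (h : IsGood g G k γ η A B)
    (hGnn : ∀ B ∈ Sk n k, ∀ v, 0 ≤ G B v) (hη : 0 ≤ η) :
    γ * η * #(NI n k A) ≤ ptot g G k A :=
  calc γ * η * #(NI n k A) = η * (γ * #(NI n k A)) := by ring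
    _ ≤ η * #((NI n k A).filter (η ≤ Corr g G ·)) :=
        mul_le_mul_of_nonneg_left
          (mul_le_of_le_div₀ (Nat.cast_nonneg _) (Nat.cast_nonneg _) h.2) hη
    _ ≤ ∑ B' ∈ NI n k A, Corr g G B' :=
        mul_card_filter_le_sum (fun B' hB' => prEvent_nonneg (hGnn B' (mem_Sk_of_mem_NI hB')) _) η
    _ ≤ ptot g G k A :=
        sum_le_sum fun B' hB' => Corr_le_pcons (hGnn B' (mem_Sk_of_mem_NI hB')) (mem_filter.1 hB').2

end Edge

theorem heavy_sets_with_large_pcons_general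
    (n k : ℕ)
    (g : (Fin n → Bool) → Bool)
    (G : Finset (Fin n → Bool) → ((Fin n → Bool) → Bool) → ℝ)
    (hGnn : ∀ B ∈ Sk n k, ∀ v, 0 ≤ G B v)
    (hGsum : ∀ B ∈ Sk n k, ∑ v, G B v = 1)
    (α ε : ℝ) (hα : 0 < α) (hε : 0 < ε)
    (A B : Finset (Fin n → Bool))
    (hgood : IsGood g G k (ε / 3) (ε / 3) A B)
    (hheavy : α / 2 <
      (∑ B'' ∈ (NI n k A).filter fun B'' => IsHeavy g G A α B'', pcons g G A B'') /
        ptot g G k A) :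
    (α / 108) * ε ^ 3 <
      (((NI n k A).filter fun B' =>
            IsHeavy g G A α B' ∧ (α / 8) * (ε ^ 2 / 9) ≤ pcons g G A B').card : ℝ) /
        ((NI n k A).card : ℝ) := by
  set N : ℝ := (#(NI n k A) : ℝ)
  have hN : 0 < N := hgood.card_NI_pos (by positivity)
  have hε3 : ε / 3 ≤ 1 := hgood.le_one
  have hptot : ε / 3 * (ε / 3) * N ≤ ptot g G k A :=
    hgood.mul_mul_card_le_ptot hGnn (by positivity)
  have hmass : α / 2 * ptot g G k A <
      ∑ B'' ∈ (NI n k A).filter (IsHeavy g G A α), pcons g G A B'' :=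
    (lt_div_iff₀ ((mul_pos (by positivity) hN).trans_le hptot)).1 hheavy
  have hsplit := sum_le_card_filter_add_mul_card (s := (NI n k A).filter (IsHeavy g G A α))
    (f := pcons g G A) (t := α / 8 * (ε ^ 2 / 9)) (by positivity) fun B' hB' =>
      have hB'k := mem_Sk_of_mem_NI (mem_filter.1 hB').1
      pcons_le_one (hGnn B' hB'k) (hGsum B' hB'k)
  rw [filter_filter] at hsplit
  have hheavyN : (#((NI n k A).filter (IsHeavy g G A α)) : ℝ) ≤ N :=
    Nat.cast_le.2 (card_filter_le _ _)
  have hcount : α / 24 * ε ^ 2 * N <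
      #((NI n k A).filter fun B' => IsHeavy g G A α B' ∧ α / 8 * (ε ^ 2 / 9) ≤ pcons g G A B') := by
    linarith [mul_le_mul_of_nonneg_left hheavyN (by positivity : 0 ≤ α / 8 * (ε ^ 2 / 9)),
      mul_le_mul_of_nonneg_left hptot (by positivity : 0 ≤ α / 2)]
  rw [lt_div_iff₀ hN]
  have hmass_pos : 0 ≤ α * ε ^ 2 * N := by positivity
  linarith [mul_le_mul_of_nonneg_right hε3 hmass_pos]

/-- Let `α, ε > 0` and `ε* = (α/8)·(ε²/9)`.  For every `(ε/3, ε/3)`-good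
edge `(A,B) ∈ I`: if `Pr_{B'' ∼ W_I(A)}[B'' is A-heavy] > α/2`, then
`Pr_{B' ∼ uniform on N_I(A)}[B' is A-heavy and p_cons(B') ≥ ε*] > (α/108)·ε³`. -/
theorem heavy_sets_with_large_pcons
    (n k : ℕ) (hn : 0 < n) (hk : 0 < k) (hkeven : Even k) (hk2 : k ≤ 2 ^ n)
    (g : (Fin n → Bool) → Bool)
    (G : Finset (Fin n → Bool) → ((Fin n → Bool) → Bool) → ℝ)
    (hGnn : ∀ B ∈ Sk n k, ∀ v, 0 ≤ G B v)
    (hGsum : ∀ B ∈ Sk n k, ∑ v, G B v = 1)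
    (hGpos : ∀ B ∈ Sk n k, 0 < Corr g G B)
    (α ε : ℝ) (hα : 0 < α) (hε : 0 < ε)
    (A B : Finset (Fin n → Bool)) (hAB : (A, B) ∈ Edges n k)
    (hgood : IsGood g G k (ε / 3) (ε / 3) A B)
    (hheavy : α / 2 <
      (∑ B'' ∈ (NI n k A).filter fun B'' => IsHeavy g G A α B'', pcons g G A B'') /
        ptot g G k A) :
    (α / 108) * ε ^ 3 <
      (((NI n k A).filter fun B' =>
            IsHeavy g G A α B' ∧ (α / 8) * (ε ^ 2 / 9) ≤ pcons g G A B').card : ℝ) /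
        ((NI n k A).card : ℝ) :=
  heavy_sets_with_large_pcons_general n k g G hGnn hGsum α ε hα hε A B hgood hheavy

end IJKW
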